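/- arXiv:math-ph/0103041 — 4 statements merged into one kernel-verified Lean document; each statement's English description precedes it below -/
import Mathlib

section
/- Let A be a bounded operator on a Banach space (or elements of a Banach algebra), and let B be another element. Then for every scalar λ, ∑_{k=1}^∞ (λ^k/k!) ∑_{j=0}^{k-1} A^j B A^{k-1-j} = e^{λA} · ((1 - e^{-λ ad_A})/ad_A)(B), where ad_A(B) = AB - BA and (1 - e^{-λ ad_A})/ad_A denotes the entire function ∑_{n=0}^∞ (-1)^n λ^{n+1} ad_A^n /(n+1)! applied to B. -/
/-!
The operators `L X = A * X` and `R X = X * A` are commuting elements of the Banach algebra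
`𝒜 →L[ℂ] 𝒜`, with `ad_A = L - R` and `A ^ j * B * A ^ (k - j) = (L ^ j * R ^ (k - j)) B`.
It therefore suffices to prove, for commuting `x`, `y` in a Banach algebra, the identity
`∑ₖ cᵏ⁺¹/(k+1)! ∑ⱼ xʲ yᵏ⁻ʲ = e^{cx} ∑ₙ (-1)ⁿ cⁿ⁺¹/(n+1)! (x - y)ⁿ`
between two expressions of `(e^{cy} - e^{cx}) / (y - x) = e^{cx} (e^{c(y-x)} - 1) / (y - x)`.
Comparing coefficients in the Cauchy product on the right reduces it to
`∑_{j ≤ k} xʲ yᵏ⁻ʲ = ∑_{i+n=k} C(k+1, i) xⁱ (y - x)ⁿ`, which follows by induction on `k` from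
the binomial expansion of `yᵏ⁺¹ = (x + (y - x))ᵏ⁺¹`.
-/

open Finset NormedSpace
open scoped Nat

theorem Commute.sum_range_pow_mul_pow_eq_sum_choose_mul_pow_sub {R : Type*} [Ring R] {x y : R}
    (h : Commute x y) (k : ℕ) :
    ∑ j ∈ range (k + 1), x ^ j * y ^ (k - j) =
      ∑ p ∈ antidiagonal k, (k + 1).choose p.1 • (x ^ p.1 * (y - x) ^ p.2) := by
  induction k with
  | zero => simp
  | succ k ih =>
    have hbinom : y ^ (k + 1) = (y - x) ^ (k + 1) +
        ∑ p ∈ antidiagonal k, (k + 1).choose (p.1 + 1) • (x ^ (p.1 + 1) * (y - x) ^ p.2) := by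
      conv_lhs => rw [← add_sub_cancel x y, (h.sub_right (Commute.refl x)).add_pow',
        Nat.sum_antidiagonal_succ]
      simp
    have hshift : ∑ j ∈ range (k + 1), x ^ (j + 1) * y ^ (k + 1 - (j + 1)) =
        ∑ p ∈ antidiagonal k, (k + 1).choose p.1 • (x ^ (p.1 + 1) * (y - x) ^ p.2) := by
      simp only [Nat.add_sub_add_right, pow_succ', mul_assoc]
      rw [← mul_sum, ih, mul_sum]
      simp only [mul_smul_comm]
    rw [sum_range_succ', Nat.sum_antidiagonal_succ, hshift, pow_zero, one_mul, Nat.sub_zero,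
      hbinom]
    simp only [Nat.choose_succ_succ', add_smul, sum_add_distrib, Nat.choose_zero_right, one_mul,
      one_smul]
    abel

theorem inv_factorial_mul_inv_factorial_succ {K : Type*} [Field K] [CharZero K] (i j : ℕ) :
    (i ! : K)⁻¹ * ((j + 1)! : K)⁻¹ = (i + j + 1).choose i / (i + j + 1)! := by
  have h := Nat.add_choose_mul_factorial_mul_factorial i (j + 1)
  rw [← Nat.choose_symm_add, ← add_assoc] at h
  have hi : (i ! : K) ≠ 0 := Nat.cast_ne_zero.2 i.factorial_ne_zero
  have hj : ((j + 1)! : K) ≠ 0 := Nat.cast_ne_zero.2 (j + 1).factorial_ne_zero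
  rw [eq_div_iff (Nat.cast_ne_zero.2 (Nat.factorial_ne_zero _)), ← h]
  push_cast
  field_simp

section BanachAlgebra

variable {𝕂 𝔸 : Type*} [RCLike 𝕂] [NormedRing 𝔸] [NormedAlgebra 𝕂 𝔸]

theorem summable_norm_neg_one_pow_mul_pow_succ_div_factorial_smul_pow (c : 𝕂) (d : 𝔸) :
    Summable fun n : ℕ => ‖((-1) ^ n * c ^ (n + 1) / (n + 1)! : 𝕂) • d ^ n‖ := by
  refine ((norm_expSeries_summable' (𝕂 := 𝕂) (c • d)).mul_left ‖c‖).of_nonneg_of_le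
    (fun _ => norm_nonneg _) fun n => ?_
  have hterm : ((-1) ^ n * c ^ (n + 1) / (n + 1)! : 𝕂) • d ^ n =
      ((-1) ^ n * c / (n + 1)) • ((n !⁻¹ : 𝕂) • (c • d) ^ n) := by
    rw [smul_pow, smul_smul, smul_smul, Nat.factorial_succ]
    congr 1
    push_cast
    field_simp
    ring
  rw [hterm, norm_smul]
  gcongr
  rw [norm_div, norm_mul, norm_pow, norm_neg, norm_one, one_pow, one_mul]
  refine div_le_self (norm_nonneg _) ?_
  exact_mod_cast (Nat.one_le_cast (α := ℝ)).2 n.succ_pos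

theorem Commute.hasSum_smul_geom_sum₂ [CompleteSpace 𝔸] {x y : 𝔸} (h : Commute x y) (c : 𝕂) :
    HasSum (fun k : ℕ => (c ^ (k + 1) / (k + 1)! : 𝕂) • ∑ j ∈ range (k + 1), x ^ j * y ^ (k - j))
      (NormedSpace.exp (c • x) *
        ∑' n : ℕ, ((-1) ^ n * c ^ (n + 1) / (n + 1)! : 𝕂) • (x - y) ^ n) := by
  have hF := norm_expSeries_summable' (𝕂 := 𝕂) (c • x)
  have hG := summable_norm_neg_one_pow_mul_pow_succ_div_factorial_smul_pow c (x - y)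
  rw [← (exp_series_hasSum_exp' (𝕂 := 𝕂) (c • x)).tsum_eq,
    tsum_mul_tsum_eq_tsum_sum_antidiagonal_of_summable_norm hF hG]
  refine (summable_norm_sum_mul_antidiagonal_of_summable_norm hF hG).of_norm.hasSum.congr_fun
    fun k => ?_
  rw [h.sum_range_pow_mul_pow_eq_sum_choose_mul_pow_sub, smul_sum]
  refine sum_congr rfl fun ⟨i, j⟩ hij => ?_
  rw [HasAntidiagonal.mem_antidiagonal] at hij
  subst hij
  have hsub : (y - x) ^ j = (-1 : 𝕂) ^ j • (x - y) ^ j := by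
    rw [← smul_pow, neg_one_smul, neg_sub]
  simp only [hsub, smul_pow, smul_mul_assoc, mul_smul_comm, smul_smul, ← Nat.cast_smul_eq_nsmul 𝕂]
  congr 1
  linear_combination
    (-(-1) ^ j * c ^ (i + j + 1)) * inv_factorial_mul_inv_factorial_succ (K := 𝕂) i j

end BanachAlgebra

namespace ContinuousLinearMap

section
variable {𝕜 R : Type*} [NontriviallyNormedField 𝕜] [NormedRing R] [NormedAlgebra 𝕜 R]

theorem commute_mul_flip_mul (a b : R) : Commute (mul 𝕜 R a) ((mul 𝕜 R).flip b) := by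
  ext x
  simp [mul_assoc]

theorem mul_pow_apply (a x : R) (n : ℕ) : (mul 𝕜 R a ^ n) x = a ^ n * x := by
  induction n with
  | zero => simp
  | succ n ih => rw [pow_succ', mul_apply_eq_comp, ih, mul_apply', pow_succ', mul_assoc]

theorem flip_mul_pow_apply (b x : R) (n : ℕ) : ((mul 𝕜 R).flip b ^ n) x = x * b ^ n := by
  induction n with
  | zero => simp
  | succ n ih => rw [pow_succ', mul_apply_eq_comp, ih, flip_apply, mul_apply', pow_succ, mul_assoc]

theorem mul_sub_flip_mul_pow_apply (a x : R) (n : ℕ) :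
    ((mul 𝕜 R a - (mul 𝕜 R).flip a) ^ n) x = (fun X : R => a * X - X * a)^[n] x := by
  induction n with
  | zero => simp
  | succ n ih => rw [pow_succ', mul_apply_eq_comp, ih, Function.iterate_succ_apply']; rfl

end

theorem exp_mul_apply {𝕂 R : Type*} [RCLike 𝕂] [NormedRing R] [NormedAlgebra 𝕂 R]
    [CompleteSpace R] (a x : R) : exp (mul 𝕂 R a) x = exp a * x := by
  have h₁ := (exp_series_hasSum_exp' (𝕂 := 𝕂) (mul 𝕂 R a)).mapL (apply 𝕂 R x)
  have h₂ := (exp_series_hasSum_exp' (𝕂 := 𝕂) a).mul_right x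
  refine h₁.unique (h₂.congr_fun fun n => ?_)
  rw [apply_apply, smul_apply, mul_pow_apply, smul_mul_assoc]

end ContinuousLinearMap

open ContinuousLinearMap in
/-- in a unital complex Banach algebra, for all λ,
∑_{k=1}^∞ (λ^k/k!) ∑_{j=0}^{k-1} A^j B A^{k-1-j}
  = e^{λA} · ((1 - e^{-λ ad_A})/ad_A)(B). -/
theorem stmt_3 {𝒜 : Type*} [NormedRing 𝒜] [NormedAlgebra ℂ 𝒜] [CompleteSpace 𝒜]
    (A B : 𝒜) (lam : ℂ) :
    (∑' k : ℕ, (lam ^ (k + 1) / (Nat.factorial (k + 1) : ℂ)) •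
        ∑ j ∈ Finset.range (k + 1), A ^ j * B * A ^ (k - j))
      = NormedSpace.exp (lam • A) *
        ∑' n : ℕ, ((-1 : ℂ) ^ n * lam ^ (n + 1) / (Nat.factorial (n + 1) : ℂ)) •
          ((fun X : 𝒜 => A * X - X * A)^[n] B) := by
  have hsum := ((commute_mul_flip_mul A A).hasSum_smul_geom_sum₂ lam).mapL (apply ℂ 𝒜 B)
  simp only [apply_apply, smul_apply, _root_.sum_apply, mul_apply_eq_comp, flip_mul_pow_apply,
    mul_pow_apply, ← mul_assoc] at hsum
  have hseries := (apply ℂ 𝒜 B).map_tsum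
    (summable_norm_neg_one_pow_mul_pow_succ_div_factorial_smul_pow lam
      (mul ℂ 𝒜 A - (mul ℂ 𝒜).flip A)).of_norm
  simp only [apply_apply, smul_apply, mul_sub_flip_mul_pow_apply] at hseries
  rw [hsum.tsum_eq, ← map_smul, exp_mul_apply, hseries]
end

section
/- Let 𝔛 and 𝔜 be finite-dimensional Hilbert spaces, A ∈ B(𝔜) and B ∈ B(𝔛) self-adjoint with disjoint spectra, and V ∈ B(𝔛,𝔜). Then the Sylvester equation AW − WB = V has a unique solution W ∈ B(𝔛,𝔜), and it satisfies ‖W‖ ≤ (min{dim 𝔛, dim 𝔜})^{1/2} · ‖V‖ / dist(Spec(A), Spec(B)). -/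
/-!
Diagonalise `A` and `B` in orthonormal eigenbases `(f i)` and `(e j)` with eigenvalues `α i`,
`β j`. In these bases the Sylvester operator `W ↦ A W - W B` acts entrywise as multiplication
by `α i - β j`, whose modulus is at least `δ = dist (Spec A) (Spec B) > 0`; hence the
Hilbert–Schmidt norm of `W` is at most that of `V` divided by `δ`. The operator norm is
dominated by the Hilbert–Schmidt norm, which is in turn at most `√(min (dim 𝔛) (dim 𝔜))`
times the operator norm. Applied to `V = 0` the estimate gives injectivity of the Sylvester
operator, hence bijectivity in finite dimension.
-/

open scoped InnerProductSpace

namespace OrthonormalBasis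

variable {𝕜 E F ι : Type*} [RCLike 𝕜] [Fintype ι] [NormedAddCommGroup E] [InnerProductSpace 𝕜 E]

theorem norm_sq_le_sum_norm_apply_sq [NormedAddCommGroup F] [NormedSpace 𝕜 F]
    (e : OrthonormalBasis ι 𝕜 E) (T : E →L[𝕜] F) :
    ‖T‖ ^ 2 ≤ ∑ j, ‖T (e j)‖ ^ 2 := by
  suffices ‖T‖ ≤ √(∑ j, ‖T (e j)‖ ^ 2) from
    (Real.le_sqrt (norm_nonneg _) (by positivity)).mp this
  refine T.opNorm_le_bound (by positivity) fun x => ?_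
  calc ‖T x‖ = ‖∑ j, ⟪e j, x⟫_𝕜 • T (e j)‖ := by
        conv_lhs => rw [← e.sum_repr' x]
        simp only [map_sum, map_smul]
    _ ≤ ∑ j, ‖⟪e j, x⟫_𝕜‖ * ‖T (e j)‖ := (norm_sum_le _ _).trans_eq (by simp only [norm_smul])
    _ ≤ √(∑ j, ‖⟪e j, x⟫_𝕜‖ ^ 2) * √(∑ j, ‖T (e j)‖ ^ 2) := Real.sum_mul_le_sqrt_mul_sqrt _ _ _
    _ = √(∑ j, ‖T (e j)‖ ^ 2) * ‖x‖ := by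
        rw [e.sum_sq_norm_inner_right, Real.sqrt_sq (norm_nonneg _), mul_comm]

theorem sum_norm_apply_sq_le [NormedAddCommGroup F] [NormedSpace 𝕜 F]
    (e : OrthonormalBasis ι 𝕜 E) (T : E →L[𝕜] F) :
    ∑ j, ‖T (e j)‖ ^ 2 ≤ Fintype.card ι * ‖T‖ ^ 2 := by
  calc ∑ j, ‖T (e j)‖ ^ 2 ≤ ∑ _j : ι, ‖T‖ ^ 2 := by
        gcongr with j
        simpa [e.orthonormal.1 j] using T.le_opNorm (e j)
    _ = Fintype.card ι * ‖T‖ ^ 2 := by simp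

variable [NormedAddCommGroup F] [InnerProductSpace 𝕜 F]

theorem sum_norm_apply_sq_eq_sum_norm_adjoint_apply_sq [CompleteSpace E] [CompleteSpace F]
    {κ : Type*} [Fintype κ]
    (e : OrthonormalBasis ι 𝕜 E) (f : OrthonormalBasis κ 𝕜 F) (T : E →L[𝕜] F) :
    ∑ j, ‖T (e j)‖ ^ 2 = ∑ i, ‖T.adjoint (f i)‖ ^ 2 := by
  simp_rw [← f.sum_sq_norm_inner_right, ← e.sum_sq_norm_inner_left,
    ContinuousLinearMap.adjoint_inner_left]
  exact Finset.sum_comm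

theorem sum_norm_apply_sq_le_min_finrank [FiniteDimensional 𝕜 E] [FiniteDimensional 𝕜 F]
    (e : OrthonormalBasis ι 𝕜 E) (T : E →L[𝕜] F) :
    ∑ j, ‖T (e j)‖ ^ 2 ≤
      (min (Module.finrank 𝕜 E) (Module.finrank 𝕜 F) : ℕ) * ‖T‖ ^ 2 := by
  have := FiniteDimensional.complete 𝕜 E
  have := FiniteDimensional.complete 𝕜 F
  rw [Nat.cast_min, min_mul_of_nonneg _ _ (by positivity)]
  refine le_min ?_ ?_
  · simpa [Module.finrank_eq_card_basis e.toBasis] using e.sum_norm_apply_sq_le T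
  · rw [e.sum_norm_apply_sq_eq_sum_norm_adjoint_apply_sq (stdOrthonormalBasis 𝕜 F)]
    simpa using (stdOrthonormalBasis 𝕜 F).sum_norm_apply_sq_le T.adjoint

end OrthonormalBasis

theorem sInf_dist_pos_of_disjoint {α : Type*} [MetricSpace α] {s t : Set α}
    (hs : IsCompact s) (ht : IsCompact t) (hst : Disjoint s t) {a b : α} (ha : a ∈ s)
    (hb : b ∈ t) : 0 < sInf {r : ℝ | ∃ a ∈ s, ∃ b ∈ t, r = dist a b} := by
  have hS : {r : ℝ | ∃ a ∈ s, ∃ b ∈ t, r = dist a b} =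
      (fun p : α × α => dist p.1 p.2) '' s ×ˢ t := by
    ext r
    constructor
    · rintro ⟨a, ha, b, hb, rfl⟩
      exact ⟨(a, b), ⟨ha, hb⟩, rfl⟩
    · rintro ⟨⟨a, b⟩, ⟨ha, hb⟩, rfl⟩
      exact ⟨a, ha, b, hb, rfl⟩
  obtain ⟨⟨a₀, b₀⟩, ⟨ha₀, hb₀⟩, hmin⟩ :=
    (hs.prod ht).exists_isMinOn ⟨(a, b), ha, hb⟩ continuous_dist.continuousOn
  have hleast : IsLeast ((fun p : α × α => dist p.1 p.2) '' s ×ˢ t) (dist a₀ b₀) := by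
    refine ⟨⟨(a₀, b₀), ⟨ha₀, hb₀⟩, rfl⟩, ?_⟩
    rintro _ ⟨p, hp, rfl⟩
    exact isMinOn_iff.mp hmin p hp
  rw [hS, hleast.csInf_eq]
  exact dist_pos.mpr (hst.ne_of_mem ha₀ hb₀)

section Sylvester

variable {𝕜 E F : Type*} [RCLike 𝕜] [NormedAddCommGroup E] [InnerProductSpace 𝕜 E]
  [NormedAddCommGroup F] [InnerProductSpace 𝕜 F]

noncomputable def sylvesterMap (A : F →L[𝕜] F) (B : E →L[𝕜] E) :
    (E →L[𝕜] F) →ₗ[𝕜] (E →L[𝕜] F) :=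
  (ContinuousLinearMap.compL 𝕜 E F F A).toLinearMap -
    ((ContinuousLinearMap.compL 𝕜 E E F).flip B).toLinearMap

theorem inner_sylvester_eigenvector [CompleteSpace F] {A : F →L[𝕜] F} {B : E →L[𝕜] E}
    (hA : IsSelfAdjoint A) {a b : ℝ} {u : F} {v : E} (hu : A u = (a : 𝕜) • u)
    (hv : B v = (b : 𝕜) • v) (W : E →L[𝕜] F) :
    ⟪u, (A ∘L W - W ∘L B) v⟫_𝕜 = ((a : 𝕜) - b) * ⟪u, W v⟫_𝕜 := by
  have hAu : ⟪u, A (W v)⟫_𝕜 = a * ⟪u, W v⟫_𝕜 := by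
    rw [← hA.adjoint_eq, ContinuousLinearMap.adjoint_inner_right, hu, inner_smul_left,
      RCLike.conj_ofReal]
  simp [inner_sub_right, hAu, hv, inner_smul_right, sub_mul]

theorem norm_le_of_sylvester [CompleteSpace E] [CompleteSpace F] [FiniteDimensional 𝕜 E]
    [FiniteDimensional 𝕜 F] {A : F →L[𝕜] F} {B : E →L[𝕜] E} (hA : IsSelfAdjoint A)
    (hB : IsSelfAdjoint B) (hAB : Disjoint (spectrum 𝕜 A) (spectrum 𝕜 B)) {V W : E →L[𝕜] F}
    (hW : A ∘L W - W ∘L B = V) :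
    ‖W‖ ≤ √(min (Module.finrank 𝕜 E) (Module.finrank 𝕜 F) : ℕ) * ‖V‖ /
      sInf {r : ℝ | ∃ a ∈ spectrum 𝕜 A, ∃ b ∈ spectrum 𝕜 B, r = dist a b} := by
  set δ := sInf {r : ℝ | ∃ a ∈ spectrum 𝕜 A, ∃ b ∈ spectrum 𝕜 B, r = dist a b}
  let f := hA.isSymmetric.eigenvectorBasis rfl
  let e := hB.isSymmetric.eigenvectorBasis rfl
  let α := hA.isSymmetric.eigenvalues rfl
  let β := hB.isSymmetric.eigenvalues rfl
  have hα i : (α i : 𝕜) ∈ spectrum 𝕜 A := by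
    rw [ContinuousLinearMap.spectrum_eq]
    exact (hA.isSymmetric.hasEigenvalue_eigenvalues rfl i).mem_spectrum
  have hβ j : (β j : 𝕜) ∈ spectrum 𝕜 B := by
    rw [ContinuousLinearMap.spectrum_eq]
    exact (hB.isSymmetric.hasEigenvalue_eigenvalues rfl j).mem_spectrum
  have hentry i j : ‖⟪f i, W (e j)⟫_𝕜‖ ^ 2 ≤ ‖⟪f i, V (e j)⟫_𝕜‖ ^ 2 / δ ^ 2 := by
    -- `δ > 0` only once both spaces are nonzero (else a spectrum is empty and `δ = sInf ∅ = 0`),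
    -- hence it is derived here from the eigenvalues `α i`, `β j`.
    have hδ : 0 < δ := sInf_dist_pos_of_disjoint (spectrum.isCompact A)
      (spectrum.isCompact B) hAB (hα i) (hβ j)
    have hδle : δ ≤ ‖(α i : 𝕜) - β j‖ :=
      csInf_le ⟨0, by rintro _ ⟨a, -, b, -, rfl⟩; exact dist_nonneg⟩
        ⟨_, hα i, _, hβ j, (dist_eq_norm _ _).symm⟩
    rw [← hW, inner_sylvester_eigenvector hA (hA.isSymmetric.apply_eigenvectorBasis rfl i)
      (hB.isSymmetric.apply_eigenvectorBasis rfl j), norm_mul, mul_pow,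
      le_div_iff₀ (by positivity), mul_comm]
    gcongr
  have hδ_nonneg : 0 ≤ δ := Real.sInf_nonneg fun _ ⟨_, _, _, _, h⟩ => h ▸ dist_nonneg
  refine (pow_le_pow_iff_left₀ (norm_nonneg _) (by positivity) two_ne_zero).mp ?_
  calc ‖W‖ ^ 2 ≤ ∑ j, ‖W (e j)‖ ^ 2 := e.norm_sq_le_sum_norm_apply_sq W
    _ ≤ (∑ j, ‖V (e j)‖ ^ 2) / δ ^ 2 := by
        simp_rw [← f.sum_sq_norm_inner_right, Finset.sum_div]
        gcongr with j _ i _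
        exact hentry i j
    _ ≤ (min (Module.finrank 𝕜 E) (Module.finrank 𝕜 F) : ℕ) * ‖V‖ ^ 2 / δ ^ 2 := by
        gcongr
        exact e.sum_norm_apply_sq_le_min_finrank V
    _ = (√(min (Module.finrank 𝕜 E) (Module.finrank 𝕜 F) : ℕ) * ‖V‖ / δ) ^ 2 := by
        rw [div_pow, mul_pow, Real.sq_sqrt (by positivity)]

end Sylvester

/-- for self-adjoint A, B on finite-dimensional Hilbert spaces with
disjoint spectra, the Sylvester equation AW − WB = V has a unique solution and
‖W‖ ≤ (min{dim 𝔛, dim 𝔜})^{1/2} ‖V‖ / dist(Spec A, Spec B). -/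
theorem stmt_6 {X Y : Type*}
    [NormedAddCommGroup X] [InnerProductSpace ℂ X] [FiniteDimensional ℂ X]
    [NormedAddCommGroup Y] [InnerProductSpace ℂ Y] [FiniteDimensional ℂ Y]
    (A : Y →L[ℂ] Y) (B : X →L[ℂ] X) (hA : IsSelfAdjoint A) (hB : IsSelfAdjoint B)
    (hdisj : spectrum ℂ A ∩ spectrum ℂ B = ∅) (V : X →L[ℂ] Y) :
    (∃! W : X →L[ℂ] Y, A ∘L W - W ∘L B = V) ∧
    ∀ W : X →L[ℂ] Y, A ∘L W - W ∘L B = V →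
      ‖W‖ ≤ Real.sqrt (min (Module.finrank ℂ X) (Module.finrank ℂ Y) : ℕ) * ‖V‖ /
        sInf {r : ℝ | ∃ a ∈ spectrum ℂ A, ∃ b ∈ spectrum ℂ B, r = dist a b} := by
  have hAB := Set.disjoint_iff_inter_eq_empty.mpr hdisj
  have hinj : Function.Injective (sylvesterMap A B) := by
    refine (injective_iff_map_eq_zero _).mpr fun W hW => norm_le_zero_iff.mp ?_
    simpa using norm_le_of_sylvester (V := 0) hA hB hAB hW
  obtain ⟨W, hW⟩ := LinearMap.injective_iff_surjective.mp hinj V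
  exact ⟨⟨W, hW, fun W' hW' => hinj (hW'.trans hW.symm)⟩,
    fun W hW => norm_le_of_sylvester hA hB hAB hW⟩
end

section
/- Let A, B, C, d be nonnegative reals with d > 0, and let φ(x) = ∑_{k=0}^∞ ((k+1)/(k+2)!)x^k. Suppose sequences of nonnegative reals (v_s)_{s≥0}, (w_s)_{s≥0}, (F_s)_{s≥0} satisfy: w_0 = v_0; F_s v_s² ≤ A v_{s+1} for all s; ∑_s F_s v_s = B < ∞; sup_s F_s v_s = C; and the recursive bound w_{s+1} ≤ exp(∑_{j=0}^s F_j w_j)·v_{s+1} + φ(F_s w_s)·F_s w_s² for all s ≥ 0. If e^{dB} + A φ(dC) d² ≤ d, then w_s ≤ d v_s for all s. -/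
/-- The entire function φ(x) = ∑_{k=0}^∞ ((k+1)/(k+2)!) x^k from the paper. -/
noncomputable def phi (x : ℝ) : ℝ :=
  ∑' k : ℕ, ((k : ℝ) + 1) / (Nat.factorial (k + 2)) * x ^ k

lemma phi_summable (x : ℝ) (hx : 0 ≤ x) :
    Summable (fun k : ℕ => ((k : ℝ) + 1) / (Nat.factorial (k + 2)) * x ^ k) := by
  refine Summable.of_nonneg_of_le (fun k => ?_) (fun k => ?_)
    (Real.summable_pow_div_factorial x)
  · positivity
  · have h1 : ((k : ℝ) + 1) / (Nat.factorial (k + 2)) ≤ 1 / Nat.factorial k := by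
      rw [div_le_div_iff₀ (by positivity) (by positivity)]
      have : (Nat.factorial (k + 2) : ℝ) = ((k : ℝ) + 2) * ((k : ℝ) + 1) * Nat.factorial k := by
        push_cast [Nat.factorial_succ]; ring
      rw [this]
      have hk : (1:ℝ) ≤ Nat.factorial k := by
        exact_mod_cast Nat.one_le_iff_ne_zero.mpr (Nat.factorial_ne_zero k)
      nlinarith [(Nat.cast_nonneg k : (0:ℝ) ≤ k)]
    calc ((k : ℝ) + 1) / (Nat.factorial (k + 2)) * x ^ k
        ≤ 1 / Nat.factorial k * x ^ k := by
          apply mul_le_mul_of_nonneg_right h1 (by positivity)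
      _ = x ^ k / Nat.factorial k := by ring

lemma phi_nonneg (x : ℝ) (hx : 0 ≤ x) : 0 ≤ phi x :=
  tsum_nonneg (fun k => by positivity)

lemma phi_mono {x y : ℝ} (hx : 0 ≤ x) (hxy : x ≤ y) : phi x ≤ phi y := by
  refine Summable.tsum_le_tsum (fun k => ?_) (phi_summable x hx) (phi_summable y (hx.trans hxy))
  apply mul_le_mul_of_nonneg_left (pow_le_pow_left₀ hx hxy k) (by positivity)

/-- numerical core of Proposition 2: under the stated recursive bounds,
if e^{dB} + Aφ(dC)d² ≤ d then w_s ≤ d v_s for all s. -/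
theorem stmt_13 (A B C d : ℝ) (hA : 0 ≤ A) (hd : 0 < d)
    (v w F : ℕ → ℝ) (hv : ∀ s, 0 ≤ v s) (hw : ∀ s, 0 ≤ w s) (hF : ∀ s, 0 ≤ F s)
    (h0 : w 0 = v 0)
    (hAv : ∀ s, F s * (v s) ^ 2 ≤ A * v (s + 1))
    (hB : HasSum (fun s => F s * v s) B)
    (hC : IsLUB (Set.range fun s => F s * v s) C)
    (hrec : ∀ s, w (s + 1) ≤
      Real.exp (∑ j ∈ Finset.range (s + 1), F j * w j) * v (s + 1)
        + phi (F s * w s) * (F s * (w s) ^ 2))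
    (hineq : Real.exp (d * B) + A * phi (d * C) * d ^ 2 ≤ d) :
    ∀ s, w s ≤ d * v s := by
  have hC0 : 0 ≤ C := le_trans (mul_nonneg (hF 0) (hv 0)) (hC.1 ⟨0, rfl⟩)
  have hdC : 0 ≤ d * C := by positivity
  have hd1 : 1 ≤ d := by
    have hB0 : 0 ≤ B := hB.nonneg (fun s => mul_nonneg (hF s) (hv s))
    have h1 : (1:ℝ) ≤ Real.exp (d * B) := Real.one_le_exp (by positivity)
    have h2 : 0 ≤ A * phi (d * C) * d ^ 2 :=
      mul_nonneg (mul_nonneg hA (phi_nonneg _ hdC)) (sq_nonneg d)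
    linarith
  -- strengthen to: ∀ s, ∀ j ≤ s
  suffices H : ∀ s, ∀ j ≤ s, w j ≤ d * v j by
    intro s; exact H s s le_rfl
  intro s
  induction s with
  | zero =>
    intro j hj; interval_cases j
    rw [h0]; nlinarith [hv 0]
  | succ s ih =>
    intro j hj
    rcases Nat.lt_succ_iff_lt_or_eq.mp (Nat.lt_succ_of_le hj) with h | h
    · exact ih j (Nat.lt_succ_iff.mp h)
    · subst h
      have hsum : ∑ j ∈ Finset.range (s + 1), F j * w j ≤ d * B := by
        calc ∑ j ∈ Finset.range (s + 1), F j * w j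
            ≤ ∑ j ∈ Finset.range (s + 1), d * (F j * v j) := by
              apply Finset.sum_le_sum
              intro i hi
              have := ih i (Nat.lt_succ_iff.mp (Finset.mem_range.mp hi))
              nlinarith [hF i, mul_le_mul_of_nonneg_left this (hF i)]
          _ = d * ∑ j ∈ Finset.range (s + 1), F j * v j := by rw [Finset.mul_sum]
          _ ≤ d * B := by
              apply mul_le_mul_of_nonneg_left _ hd.le
              exact sum_le_hasSum _ (fun i _ => mul_nonneg (hF i) (hv i)) hB
      have hws : w s ≤ d * v s := ih s le_rfl
      have hFws : F s * w s ≤ d * C := by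
        have hle : F s * v s ≤ C := hC.1 ⟨s, rfl⟩
        nlinarith [hF s, mul_le_mul_of_nonneg_left hws (hF s)]
      have hFws0 : 0 ≤ F s * w s := mul_nonneg (hF s) (hw s)
      have hsq : F s * (w s) ^ 2 ≤ d ^ 2 * (A * v (s+1)) := by
        calc F s * (w s) ^ 2 ≤ F s * (d * v s) ^ 2 :=
              mul_le_mul_of_nonneg_left (pow_le_pow_left₀ (hw s) hws 2) (hF s)
          _ = d ^ 2 * (F s * (v s) ^ 2) := by ring
          _ ≤ d ^ 2 * (A * v (s + 1)) := mul_le_mul_of_nonneg_left (hAv s) (sq_nonneg d)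
      calc w (s + 1)
          ≤ Real.exp (∑ j ∈ Finset.range (s + 1), F j * w j) * v (s + 1)
            + phi (F s * w s) * (F s * (w s) ^ 2) := hrec s
        _ ≤ Real.exp (d * B) * v (s + 1) + phi (d * C) * (d ^ 2 * (A * v (s+1))) := by
            apply add_le_add
            · exact mul_le_mul_of_nonneg_right (Real.exp_le_exp.mpr hsum) (hv _)
            · exact mul_le_mul (phi_mono hFws0 hFws) hsq
                (mul_nonneg (hF s) (sq_nonneg _)) (phi_nonneg _ hdC)
        _ = (Real.exp (d * B) + A * phi (d * C) * d ^ 2) * v (s + 1) := by ring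
        _ ≤ d * v (s + 1) := mul_le_mul_of_nonneg_right hineq (hv _)
end

section
/- Let 𝔄₁ and 𝔄₂ be the weighted spaces of families 𝒱 = (𝒱_{knm}(ω)) with norms ‖𝒱‖_i = sup_{ω≠ω'} sup_n ∑_{k,m} (‖𝒱_{knm}(ω)‖ + φ_i ‖∂𝒱_{knm}(ω,ω')‖) e^{|k|/E_i}, i = 1,2, where ∂𝒱(ω,ω') = (𝒱(ω)−𝒱(ω'))/(ω−ω'), and assume ϱ = 1/E₁ − 1/E₂ ≥ 0 and φ₂ ≤ φ₁. Let Γ_{knm}(ω) ∈ B(B(H_m,H_n)) define the entrywise linear map Γ(𝒱)_{knm}(ω) = Γ_{knm}(ω)(𝒱_{knm}(ω)). Then ‖Γ‖_{B(𝔄₁,𝔄₂)} ≤ sup_{ω≠ω'} sup_k sup_{n,m} e^{−ϱ|k|}(‖Γ_{knm}(ω)‖ + φ₂ ‖∂Γ_{knm}(ω,ω')‖). -/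
/-!
Entrywise, the difference quotient of `Γ(𝒱)` obeys the Leibniz rule
`∂(Γ 𝒱) = (∂Γ) 𝒱(ω) + Γ(ω') (∂𝒱)`, so with `K = e^{ϱ|k|} M` bounding both
`‖Γ(ω)‖ + φ₂ ‖∂Γ‖` and `‖Γ(ω')‖` (the hypothesis at the swapped pair), each term of the
`𝔄₂`-sum is at most `K (‖𝒱‖ + φ₁ ‖∂𝒱‖) e^{|k|/E₂} = M (‖𝒱‖ + φ₁ ‖∂𝒱‖) e^{|k|/E₁}`.
Summing and bounding the `𝔄₁`-sum by its supremum gives the claim.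
-/

namespace ContinuousLinearMap

variable {𝕜 E F : Type*} [NontriviallyNormedField 𝕜]
  [SeminormedAddCommGroup E] [NormedSpace 𝕜 E] [SeminormedAddCommGroup F] [NormedSpace 𝕜 F]

theorem norm_apply_sub_apply_le (A A' : E →L[𝕜] F) (v v' : E) :
    ‖A v - A' v'‖ ≤ ‖A - A'‖ * ‖v‖ + ‖A'‖ * ‖v - v'‖ := by
  rw [show A v - A' v' = (A - A') v + A' (v - v') by simp]
  exact (norm_add_le _ _).trans (add_le_add ((A - A').le_opNorm v) (A'.le_opNorm _))

variable [NormedSpace ℝ E] [NormedSpace ℝ F] [SMulCommClass 𝕜 ℝ F]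

theorem norm_smul_apply_sub_apply_le (A A' : E →L[𝕜] F) (v v' : E) (c : ℝ) :
    ‖c • (A v - A' v')‖ ≤ ‖c • (A - A')‖ * ‖v‖ + ‖A'‖ * ‖c • (v - v')‖ := by
  simp only [norm_smul]
  nlinarith [norm_apply_sub_apply_le A A' v v', norm_nonneg c]

theorem norm_apply_add_mul_norm_smul_sub_apply_le (A A' : E →L[𝕜] F) (v v' : E)
    {c φ₁ φ₂ K : ℝ} (hφ₂ : 0 ≤ φ₂) (hφ : φ₂ ≤ φ₁)
    (hA : ‖A‖ + φ₂ * ‖c • (A - A')‖ ≤ K) (hA' : ‖A'‖ ≤ K) :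
    ‖A v‖ + φ₂ * ‖c • (A v - A' v')‖ ≤ K * (‖v‖ + φ₁ * ‖c • (v - v')‖) := by
  have hK : 0 ≤ K := (norm_nonneg _).trans hA'
  calc ‖A v‖ + φ₂ * ‖c • (A v - A' v')‖
      ≤ ‖A‖ * ‖v‖ + φ₂ * (‖c • (A - A')‖ * ‖v‖ + ‖A'‖ * ‖c • (v - v')‖) :=
        add_le_add (A.le_opNorm v)
          (mul_le_mul_of_nonneg_left (norm_smul_apply_sub_apply_le A A' v v' c) hφ₂)
    _ = (‖A‖ + φ₂ * ‖c • (A - A')‖) * ‖v‖ + φ₂ * ‖A'‖ * ‖c • (v - v')‖ := by ring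
    _ ≤ K * ‖v‖ + φ₁ * K * ‖c • (v - v')‖ := by gcongr; exact hφ₂.trans hφ
    _ = K * (‖v‖ + φ₁ * ‖c • (v - v')‖) := by ring

end ContinuousLinearMap

theorem le_exp_mul_of_exp_neg_mul_le {r x M : ℝ} (h : Real.exp (-r) * x ≤ M) :
    x ≤ Real.exp r * M := by
  rwa [Real.exp_neg, inv_mul_le_iff₀ (Real.exp_pos r)] at h

theorem tsum_le_mul_sSup {ι : Type*} {f g : ι → ℝ} {M : ℝ} {S : Set ℝ} (hf : 0 ≤ f)
    (hfg : ∀ i, f i ≤ M * g i) (hg : Summable g) (hM : 0 ≤ M) (hS : BddAbove S)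
    (hgS : ∑' i, g i ∈ S) : ∑' i, f i ≤ M * sSup S :=
  have hMg : Summable (M * g ·) := hg.mul_left M
  calc ∑' i, f i ≤ ∑' i, M * g i := (hMg.of_nonneg_of_le hf hfg).tsum_le_tsum hfg hMg
    _ = M * ∑' i, g i := tsum_mul_left
    _ ≤ M * sSup S := mul_le_mul_of_nonneg_left (le_csSup hS hgS) hM

theorem stmt_17_general (H : ℕ → Type*) [∀ n, NormedAddCommGroup (H n)]
    [∀ n, InnerProductSpace ℂ (H n)]
    (Ω : Set ℝ) (E₁ E₂ φ₁ φ₂ ϱ : ℝ)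
    (hφ₂ : 0 < φ₂)
    (hϱ : ϱ = 1 / E₁ - 1 / E₂) (hφ : φ₂ ≤ φ₁)
    (Γ : ℝ → ℤ → (n : ℕ) → (m : ℕ) → ((H m →L[ℂ] H n) →L[ℂ] (H m →L[ℂ] H n)))
    (V : ℝ → ℤ → (n : ℕ) → (m : ℕ) → (H m →L[ℂ] H n))
    (hsum : ∀ ω ∈ Ω, ∀ ω' ∈ Ω, ω ≠ ω' → ∀ n, Summable (fun km : ℤ × ℕ =>
      (‖V ω km.1 n km.2‖ +
          φ₁ * ‖(ω - ω')⁻¹ • (V ω km.1 n km.2 - V ω' km.1 n km.2)‖) *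
        Real.exp (|(km.1 : ℝ)| / E₁)))
    (hbdd : BddAbove {x : ℝ | ∃ ω ∈ Ω, ∃ ω' ∈ Ω, ω ≠ ω' ∧ ∃ n, x =
      ∑' km : ℤ × ℕ,
        (‖V ω km.1 n km.2‖ +
            φ₁ * ‖(ω - ω')⁻¹ • (V ω km.1 n km.2 - V ω' km.1 n km.2)‖) *
          Real.exp (|(km.1 : ℝ)| / E₁)})
    (M : ℝ)
    (hM : ∀ ω ∈ Ω, ∀ ω' ∈ Ω, ω ≠ ω' → ∀ (k : ℤ) (n m : ℕ),
      Real.exp (-ϱ * |(k : ℝ)|) *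
          (‖Γ ω k n m‖ + φ₂ * ‖(ω - ω')⁻¹ • (Γ ω k n m - Γ ω' k n m)‖) ≤ M) :
    ∀ ω ∈ Ω, ∀ ω' ∈ Ω, ω ≠ ω' → ∀ n,
      (∑' km : ℤ × ℕ,
          (‖Γ ω km.1 n km.2 (V ω km.1 n km.2)‖ +
              φ₂ * ‖(ω - ω')⁻¹ •
                (Γ ω km.1 n km.2 (V ω km.1 n km.2) -
                  Γ ω' km.1 n km.2 (V ω' km.1 n km.2))‖) *
            Real.exp (|(km.1 : ℝ)| / E₂))
        ≤ M * sSup {x : ℝ | ∃ ω ∈ Ω, ∃ ω' ∈ Ω, ω ≠ ω' ∧ ∃ n, x =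
            ∑' km : ℤ × ℕ,
              (‖V ω km.1 n km.2‖ +
                  φ₁ * ‖(ω - ω')⁻¹ • (V ω km.1 n km.2 - V ω' km.1 n km.2)‖) *
                Real.exp (|(km.1 : ℝ)| / E₁)} := by
  intro ω hω ω' hω' hne n
  have hΓ : ∀ ω ∈ Ω, ∀ ω' ∈ Ω, ω ≠ ω' → ∀ k n m,
      ‖Γ ω k n m‖ + φ₂ * ‖(ω - ω')⁻¹ • (Γ ω k n m - Γ ω' k n m)‖
        ≤ Real.exp (ϱ * |(k : ℝ)|) * M := fun ω hω ω' hω' hne k n m =>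
    le_exp_mul_of_exp_neg_mul_le (by simpa only [neg_mul] using hM ω hω ω' hω' hne k n m)
  have hM0 : 0 ≤ M := le_trans (by positivity) (hM ω hω ω' hω' hne 0 0 0)
  refine tsum_le_mul_sSup (fun _ => by positivity) (fun ⟨k, m⟩ => ?_) (hsum ω hω ω' hω' hne n)
    hM0 hbdd ⟨ω, hω, ω', hω', hne, n, rfl⟩
  have hΓ' : ‖Γ ω' k n m‖ ≤ Real.exp (ϱ * |(k : ℝ)|) * M :=
    (le_add_of_nonneg_right (by positivity)).trans (hΓ ω' hω' ω hω hne.symm k n m)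
  have hexp : Real.exp (ϱ * |(k : ℝ)|) * Real.exp (|(k : ℝ)| / E₂)
      = Real.exp (|(k : ℝ)| / E₁) := by
    rw [← Real.exp_add, hϱ]; ring_nf
  calc _ ≤ Real.exp (ϱ * |(k : ℝ)|) * M *
          (‖V ω k n m‖ + φ₁ * ‖(ω - ω')⁻¹ • (V ω k n m - V ω' k n m)‖) *
          Real.exp (|(k : ℝ)| / E₂) := by
        gcongr
        exact ContinuousLinearMap.norm_apply_add_mul_norm_smul_sub_apply_le _ _ _ _ hφ₂.le hφ
          (hΓ ω hω ω' hω' hne k n m) hΓ'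
    _ = _ := by rw [← hexp]; ring

/-- the entrywise map Γ(𝒱)_{knm}(ω) = Γ_{knm}(ω)(𝒱_{knm}(ω)) between the
weighted spaces 𝔄₁, 𝔄₂ (with data (φ₁,E₁), (φ₂,E₂), ϱ = 1/E₁ − 1/E₂ ≥ 0, φ₂ ≤ φ₁)
has operator norm bounded by
sup_{ω≠ω'} sup_k sup_{n,m} e^{−ϱ|k|}(‖Γ_{knm}(ω)‖ + φ₂‖∂Γ_{knm}(ω,ω')‖):
for any upper bound M of the latter quantity, the 𝔄₂-norm expression of Γ(𝒱) is
bounded by M times the 𝔄₁-norm of 𝒱. -/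
theorem stmt_17 (H : ℕ → Type*) [∀ n, NormedAddCommGroup (H n)]
    [∀ n, InnerProductSpace ℂ (H n)] [∀ n, CompleteSpace (H n)]
    (Ω : Set ℝ) (E₁ E₂ φ₁ φ₂ ϱ : ℝ)
    (hE₁ : 0 < E₁) (hE₂ : 0 < E₂) (hφ₁ : 0 < φ₁) (hφ₂ : 0 < φ₂)
    (hϱ : ϱ = 1 / E₁ - 1 / E₂) (hϱ0 : 0 ≤ ϱ) (hφ : φ₂ ≤ φ₁)
    (Γ : ℝ → ℤ → (n : ℕ) → (m : ℕ) → ((H m →L[ℂ] H n) →L[ℂ] (H m →L[ℂ] H n)))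
    (V : ℝ → ℤ → (n : ℕ) → (m : ℕ) → (H m →L[ℂ] H n))
    (hsum : ∀ ω ∈ Ω, ∀ ω' ∈ Ω, ω ≠ ω' → ∀ n, Summable (fun km : ℤ × ℕ =>
      (‖V ω km.1 n km.2‖ +
          φ₁ * ‖(ω - ω')⁻¹ • (V ω km.1 n km.2 - V ω' km.1 n km.2)‖) *
        Real.exp (|(km.1 : ℝ)| / E₁)))
    (hbdd : BddAbove {x : ℝ | ∃ ω ∈ Ω, ∃ ω' ∈ Ω, ω ≠ ω' ∧ ∃ n, x =
      ∑' km : ℤ × ℕ,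
        (‖V ω km.1 n km.2‖ +
            φ₁ * ‖(ω - ω')⁻¹ • (V ω km.1 n km.2 - V ω' km.1 n km.2)‖) *
          Real.exp (|(km.1 : ℝ)| / E₁)})
    (M : ℝ)
    (hM : ∀ ω ∈ Ω, ∀ ω' ∈ Ω, ω ≠ ω' → ∀ (k : ℤ) (n m : ℕ),
      Real.exp (-ϱ * |(k : ℝ)|) *
          (‖Γ ω k n m‖ + φ₂ * ‖(ω - ω')⁻¹ • (Γ ω k n m - Γ ω' k n m)‖) ≤ M) :
    ∀ ω ∈ Ω, ∀ ω' ∈ Ω, ω ≠ ω' → ∀ n,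
      (∑' km : ℤ × ℕ,
          (‖Γ ω km.1 n km.2 (V ω km.1 n km.2)‖ +
              φ₂ * ‖(ω - ω')⁻¹ •
                (Γ ω km.1 n km.2 (V ω km.1 n km.2) -
                  Γ ω' km.1 n km.2 (V ω' km.1 n km.2))‖) *
            Real.exp (|(km.1 : ℝ)| / E₂))
        ≤ M * sSup {x : ℝ | ∃ ω ∈ Ω, ∃ ω' ∈ Ω, ω ≠ ω' ∧ ∃ n, x =
            ∑' km : ℤ × ℕ,
              (‖V ω km.1 n km.2‖ +
                  φ₁ * ‖(ω - ω')⁻¹ • (V ω km.1 n km.2 - V ω' km.1 n km.2)‖) *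
                Real.exp (|(km.1 : ℝ)| / E₁)} :=
  stmt_17_general H Ω E₁ E₂ φ₁ φ₂ ϱ hφ₂ hϱ hφ Γ V hsum hbdd M hM
end
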